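/- Suppose each operator f_i is continuously differentiable with ‖∇₁f_i(y, w)‖_op ≤ C_{∇f} for all (y, w), the map y ↦ ∇₁f_i(y, w) is L_{∇f}-Lipschitz (in Frobenius norm), and the exact backward gradients satisfy ‖v_i‖ ≤ C_v for all i. Let v_N = ṽ_N = 1, and define v_{i-1} = ∇₁f_i(y_{i-1}, w_i)ᵀ v_i and ṽ_{i-1} = ∇₁f_i(ỹ_{i-1}, w_i)ᵀ ṽ_i + ε_i for i = N,…,2, where ε_i ∈ ℝ^{d_{i-1}} are arbitrary backward perturbation vectors and ỹ_j, y_j are the perturbed and exact forward trajectories. Then for every i = 1,…,N−1, ‖ṽ_i − v_i‖² ≤ 3 C_v² L_{∇f}² Σ_{j=i}^{N−1} (3C_{∇f}²)^{j−i} ‖ỹ_j − y_j‖² + 3 Σ_{j=i}^{N−1} (3C_{∇f}²)^{j−i} ‖ε_{j+1}‖². -/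

import Mathlib

open scoped BigOperators

noncomputable section

/-- The Frobenius norm of a (continuous) linear map out of a Euclidean space:
`‖A‖_F = sqrt (∑_j ‖A e_j‖²)` where `(e_j)` is the standard orthonormal basis. -/
noncomputable def frobNorm {n : ℕ} {F : Type*} [NormedAddCommGroup F] [NormedSpace ℝ F]
    (A : EuclideanSpace ℝ (Fin n) →L[ℝ] F) : ℝ :=
  Real.sqrt (∑ j, ‖A (EuclideanSpace.single j 1)‖ ^ 2)

/-!
With `A = ∇₁f_{i+1}(y_i)` and `B = ∇₁f_{i+1}(ỹ_i)` the error splits as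
`ṽ_i - v_i = Bᵀ (ṽ_{i+1} - v_{i+1}) + (B - A)ᵀ v_{i+1} + ε_{i+1}`, and the three terms are
bounded by `C_{∇f} ‖ṽ_{i+1} - v_{i+1}‖`, `L_{∇f} ‖ỹ_i - y_i‖ C_v` (the operator norm is dominated
by the Frobenius norm) and `‖ε_{i+1}‖`. By `(a + b + c)² ≤ 3 (a² + b² + c²)` the squared errors
obey the linear recursion `e_i ≤ 3 C_{∇f}² e_{i+1} + c_i` with `e_N = 0`, which unrolls to the
geometric sum.
-/

open Finset InnerProduct

theorem opNorm_le_frobNorm {n : ℕ} {F : Type*} [NormedAddCommGroup F] [NormedSpace ℝ F]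
    (A : EuclideanSpace ℝ (Fin n) →L[ℝ] F) : ‖A‖ ≤ frobNorm A := by
  refine A.opNorm_le_bound (Real.sqrt_nonneg _) fun x => ?_
  have hAx : A x = ∑ j, x j • A (EuclideanSpace.single j 1) := by
    conv_lhs => rw [← (EuclideanSpace.basisFun (Fin n) ℝ).sum_repr x]
    simp
  calc ‖A x‖ ≤ ∑ j, ‖x j‖ * ‖A (EuclideanSpace.single j 1)‖ := by
        rw [hAx]
        exact (norm_sum_le _ _).trans_eq (by simp [norm_smul])
    _ ≤ frobNorm A * ‖x‖ := by
        rw [frobNorm, EuclideanSpace.norm_eq, ← Real.sqrt_mul (by positivity), mul_comm,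
          Real.le_sqrt (by positivity) (by positivity)]
        exact sum_mul_sq_le_sq_mul_sq _ _ _

section Adjoint

variable {𝕜 E F : Type*} [RCLike 𝕜] [NormedAddCommGroup E] [InnerProductSpace 𝕜 E]
  [CompleteSpace E] [NormedAddCommGroup F] [InnerProductSpace 𝕜 F] [CompleteSpace F]

theorem norm_adjoint_add_sub_adjoint_le (A B : E →L[𝕜] F) (u u' : F) (e : E) :
    ‖(B†) u' + e - (A†) u‖ ≤ ‖B‖ * ‖u' - u‖ + ‖B - A‖ * ‖u‖ + ‖e‖ := by
  have hsplit : (B†) u' + e - (A†) u = (B†) (u' - u) + ((B - A)†) u + e := by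
    simp only [map_sub, sub_apply]
    abel
  rw [hsplit, ← ContinuousLinearMap.adjoint.norm_map B,
    ← ContinuousLinearMap.adjoint.norm_map (B - A)]
  refine (norm_add₃_le ..).trans ?_
  gcongr <;> exact ContinuousLinearMap.le_opNorm _ _

theorem sq_norm_adjoint_add_sub_adjoint_le {A B : E →L[𝕜] F} {u : F} {C L M r : ℝ}
    (hB : ‖B‖ ≤ C) (hBA : ‖B - A‖ ≤ L * r) (hu : ‖u‖ ≤ M) (u' : F) (e : E) :
    ‖(B†) u' + e - (A†) u‖ ^ 2 ≤
      3 * C ^ 2 * ‖u' - u‖ ^ 2 + (3 * M ^ 2 * L ^ 2 * r ^ 2 + 3 * ‖e‖ ^ 2) := by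
  have htri := norm_adjoint_add_sub_adjoint_le A B u u' e
  have h1 : ‖B‖ * ‖u' - u‖ ≤ C * ‖u' - u‖ := by gcongr
  have h2 : ‖B - A‖ * ‖u‖ ≤ L * r * M :=
    mul_le_mul hBA hu (norm_nonneg _) ((norm_nonneg _).trans hBA)
  have h3 : ‖(B†) u' + e - (A†) u‖ ^ 2 ≤ (C * ‖u' - u‖ + L * r * M + ‖e‖) ^ 2 := by
    gcongr
    linarith
  nlinarith [sq_nonneg (C * ‖u' - u‖ - L * r * M), sq_nonneg (C * ‖u' - u‖ - ‖e‖),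
    sq_nonneg (L * r * M - ‖e‖)]

end Adjoint

theorem sum_Icc_pow_sub_mul_eq_add_mul {R : Type*} [CommSemiring R] (q : R) (c : ℕ → R)
    {i n : ℕ} (hi : i ≤ n) :
    ∑ j ∈ Icc i n, q ^ (j - i) * c j =
      c i + q * ∑ j ∈ Icc (i + 1) n, q ^ (j - (i + 1)) * c j := by
  rw [← add_sum_Ioc_eq_sum_Icc hi, Nat.sub_self, pow_zero, one_mul, Icc_add_one_left_eq_Ioc,
    mul_sum]
  congr 1
  refine sum_congr rfl fun j hj => ?_
  rw [show j - i = j - (i + 1) + 1 by grind, pow_succ]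
  ring

theorem le_sum_Icc_pow_sub_mul_of_le_mul_succ_add {R : Type*} [CommSemiring R] [PartialOrder R]
    [IsOrderedRing R] {e c : ℕ → R} {q : R} {m n : ℕ} (hq : 0 ≤ q)
    (hstep : ∀ i, m ≤ i → i ≤ n → e i ≤ q * e (i + 1) + c i) (hlast : e (n + 1) ≤ 0) {i : ℕ}
    (hmi : m ≤ i) (hin : i ≤ n + 1) : e i ≤ ∑ j ∈ Icc i n, q ^ (j - i) * c j := by
  induction hin using Nat.decreasingInduction with
  | self => simpa using hlast
  | of_succ k hk ih =>
    rw [sum_Icc_pow_sub_mul_eq_add_mul q c (by omega), add_comm (c k)]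
    exact (hstep k hmi (by omega)).trans (by gcongr; exact ih (by omega))

theorem perturbed_backward_error_general
    (N : ℕ) (d dw : ℕ → ℕ)
    (f : (i : ℕ) → EuclideanSpace ℝ (Fin (d (i - 1))) → EuclideanSpace ℝ (Fin (dw i)) →
        EuclideanSpace ℝ (Fin (d i)))
    (Cf L1f Cv : ℝ)
    (hJ1 : ∀ i, 1 ≤ i → i ≤ N →
      ∀ (yv : EuclideanSpace ℝ (Fin (d (i - 1)))) (wi : EuclideanSpace ℝ (Fin (dw i))),
        ‖fderiv ℝ (fun z => f i z wi) yv‖ ≤ Cf)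
    (hLipJ1 : ∀ i, 1 ≤ i → i ≤ N →
      ∀ (y₁ y₂ : EuclideanSpace ℝ (Fin (d (i - 1)))) (wi : EuclideanSpace ℝ (Fin (dw i))),
        frobNorm (fderiv ℝ (fun z => f i z wi) y₁ - fderiv ℝ (fun z => f i z wi) y₂) ≤
          L1f * ‖y₁ - y₂‖)
    (w : ∀ i, EuclideanSpace ℝ (Fin (dw i)))
    (y ytil v vtil : ∀ i, EuclideanSpace ℝ (Fin (d i)))
    (ε : ∀ i, EuclideanSpace ℝ (Fin (d (i - 1))))
    (hvbound : ∀ i, 1 ≤ i → i ≤ N → ‖v i‖ ≤ Cv)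
    (hvN : ∀ j, v N j = 1) (hvtilN : ∀ j, vtil N j = 1)
    (hbwd : ∀ i, 2 ≤ i → i ≤ N →
      v (i - 1) =
        ContinuousLinearMap.adjoint (fderiv ℝ (fun z => f i z (w i)) (y (i - 1))) (v i))
    (hbwdp : ∀ i, 2 ≤ i → i ≤ N →
      vtil (i - 1) =
        ContinuousLinearMap.adjoint (fderiv ℝ (fun z => f i z (w i)) (ytil (i - 1))) (vtil i)
          + ε i) :
    ∀ i, 1 ≤ i → i ≤ N - 1 →
      ‖vtil i - v i‖ ^ 2 ≤
        3 * Cv ^ 2 * L1f ^ 2 *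
            ∑ j ∈ Finset.Icc i (N - 1), (3 * Cf ^ 2) ^ (j - i) * ‖ytil j - y j‖ ^ 2
          + 3 * ∑ j ∈ Finset.Icc i (N - 1), (3 * Cf ^ 2) ^ (j - i) * ‖ε (j + 1)‖ ^ 2 := by
  intro i hi1 hi2
  have hstep : ∀ j, 1 ≤ j → j ≤ N - 1 →
      ‖vtil j - v j‖ ^ 2 ≤ 3 * Cf ^ 2 * ‖vtil (j + 1) - v (j + 1)‖ ^ 2 +
        (3 * Cv ^ 2 * L1f ^ 2 * ‖ytil j - y j‖ ^ 2 + 3 * ‖ε (j + 1)‖ ^ 2) := by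
    intro j hj1 hj2
    have hb := hbwd (j + 1) (by omega) (by omega)
    have hbp := hbwdp (j + 1) (by omega) (by omega)
    dsimp only [Nat.add_one_sub_one] at hb hbp
    rw [hb, hbp]
    exact sq_norm_adjoint_add_sub_adjoint_le (hJ1 _ (by omega) (by omega) _ _)
      ((opNorm_le_frobNorm _).trans (hLipJ1 _ (by omega) (by omega) _ _ _))
      (hvbound _ (by omega) (by omega)) _ _
  have hlast : ‖vtil (N - 1 + 1) - v (N - 1 + 1)‖ ^ 2 ≤ 0 := by
    have hvvN : vtil N = v N := by ext j; rw [hvtilN, hvN]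
    rw [Nat.sub_add_cancel (by omega : 1 ≤ N), hvvN, sub_self, norm_zero, sq, mul_zero]
  calc ‖vtil i - v i‖ ^ 2
      ≤ ∑ j ∈ Icc i (N - 1), (3 * Cf ^ 2) ^ (j - i) *
          (3 * Cv ^ 2 * L1f ^ 2 * ‖ytil j - y j‖ ^ 2 + 3 * ‖ε (j + 1)‖ ^ 2) :=
        le_sum_Icc_pow_sub_mul_of_le_mul_succ_add (e := fun j => ‖vtil j - v j‖ ^ 2)
          (by positivity) hstep hlast hi1 (by omega)
    _ = _ := by
        rw [mul_sum, mul_sum, ← sum_add_distrib]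
        exact sum_congr rfl fun j _ => by ring

/-- **Perturbed backward-pass error propagation.**
Suppose each operator `f i` is continuously differentiable, `‖∇₁ f i (y, w)‖_op ≤ Cf`, the map
`y ↦ ∇₁ f i (y, w)` is `L1f`-Lipschitz in Frobenius norm, and the exact backward gradients
satisfy `‖v i‖ ≤ Cv`.  With exact/perturbed forward trajectories `y`, `ỹ` and backward passes
`v N = ṽ N = 1`, `v (i-1) = ∇₁f_i(y_{i-1},w_i)ᵀ v_i`,
`ṽ (i-1) = ∇₁f_i(ỹ_{i-1},w_i)ᵀ ṽ_i + ε_i`, we have for every `i = 1, …, N−1`: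
`‖ṽ_i − v_i‖² ≤ 3 Cv² L1f² ∑_{j=i}^{N−1} (3Cf²)^{j−i} ‖ỹ_j − y_j‖²
  + 3 ∑_{j=i}^{N−1} (3Cf²)^{j−i} ‖ε_{j+1}‖²`. -/
theorem perturbed_backward_error
    (N : ℕ) (hN : 2 ≤ N)
    (d dw : ℕ → ℕ) (hdN : d N = 1)
    (f : (i : ℕ) → EuclideanSpace ℝ (Fin (d (i - 1))) → EuclideanSpace ℝ (Fin (dw i)) →
        EuclideanSpace ℝ (Fin (d i)))
    (Cf L1f Cv : ℝ) (hCf : 0 ≤ Cf) (hL1f : 0 ≤ L1f) (hCv : 0 ≤ Cv)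
    (hC1 : ∀ i, 1 ≤ i → i ≤ N →
      ContDiff ℝ 1 (fun p : EuclideanSpace ℝ (Fin (d (i - 1))) × EuclideanSpace ℝ (Fin (dw i)) =>
        f i p.1 p.2))
    (hJ1 : ∀ i, 1 ≤ i → i ≤ N →
      ∀ (yv : EuclideanSpace ℝ (Fin (d (i - 1)))) (wi : EuclideanSpace ℝ (Fin (dw i))),
        ‖fderiv ℝ (fun z => f i z wi) yv‖ ≤ Cf)
    (hLipJ1 : ∀ i, 1 ≤ i → i ≤ N →
      ∀ (y₁ y₂ : EuclideanSpace ℝ (Fin (d (i - 1)))) (wi : EuclideanSpace ℝ (Fin (dw i))),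
        frobNorm (fderiv ℝ (fun z => f i z wi) y₁ - fderiv ℝ (fun z => f i z wi) y₂) ≤
          L1f * ‖y₁ - y₂‖)
    (x : EuclideanSpace ℝ (Fin (d 0)))
    (w : ∀ i, EuclideanSpace ℝ (Fin (dw i)))
    (y ytil v vtil : ∀ i, EuclideanSpace ℝ (Fin (d i)))
    (δ : ∀ i, EuclideanSpace ℝ (Fin (d i)))
    (ε : ∀ i, EuclideanSpace ℝ (Fin (d (i - 1))))
    (hy0 : y 0 = x) (hytil0 : ytil 0 = x)
    (hfwd : ∀ i, 1 ≤ i → i ≤ N → y i = f i (y (i - 1)) (w i))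
    (hfwdp : ∀ i, 1 ≤ i → i ≤ N → ytil i = f i (ytil (i - 1)) (w i) + δ i)
    (hvbound : ∀ i, 1 ≤ i → i ≤ N → ‖v i‖ ≤ Cv)
    (hvN : ∀ j, v N j = 1) (hvtilN : ∀ j, vtil N j = 1)
    (hbwd : ∀ i, 2 ≤ i → i ≤ N →
      v (i - 1) =
        ContinuousLinearMap.adjoint (fderiv ℝ (fun z => f i z (w i)) (y (i - 1))) (v i))
    (hbwdp : ∀ i, 2 ≤ i → i ≤ N →
      vtil (i - 1) =
        ContinuousLinearMap.adjoint (fderiv ℝ (fun z => f i z (w i)) (ytil (i - 1))) (vtil i)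
          + ε i) :
    ∀ i, 1 ≤ i → i ≤ N - 1 →
      ‖vtil i - v i‖ ^ 2 ≤
        3 * Cv ^ 2 * L1f ^ 2 *
            ∑ j ∈ Finset.Icc i (N - 1), (3 * Cf ^ 2) ^ (j - i) * ‖ytil j - y j‖ ^ 2
          + 3 * ∑ j ∈ Finset.Icc i (N - 1), (3 * Cf ^ 2) ^ (j - i) * ‖ε (j + 1)‖ ^ 2 :=
  perturbed_backward_error_general N d dw f Cf L1f Cv hJ1 hLipJ1 w y ytil v vtil ε hvbound hvN
    hvtilN hbwd hbwdp
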